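/- arXiv:2106.00631 — 4 statements merged into one kernel-verified Lean document; each statement's English description precedes it below -/
import Mathlib

section
/- Let Γ be an abelian subgroup of the isometry group of a compact metric space X acting minimally on X. Then the closure of Γ in the isometry group acts freely on X: if u, w are in the closure of Γ and u x = w x for some x ∈ X, then u = w. -/
/-!
Every limit of maps commuting with `g` commutes with `g` (evaluation is continuous), so each
element of the closure of the abelian group `Γ` commutes with all of `Γ`. Hence if `u x = w x`,
the closed set where `u` and `w` agree contains the orbit `Γ x`, which is dense by minimality.
-/

namespace ContinuousMap

variable {X : Type*} [TopologicalSpace X] [T2Space X]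

theorem isClosed_setOf_commute {g : X → X} (hg : Continuous g) :
    IsClosed {f : C(X, X) | Function.Commute ⇑f g} := by
  simp only [Function.Commute, Function.Semiconj, Set.ofPred_forall]
  exact isClosed_iInter fun y =>
    isClosed_eq (continuous_eval_const (g y)) (hg.comp (continuous_eval_const y))

theorem commute_of_mem_closure {S : Set C(X, X)} {g : X → X} (hg : Continuous g)
    (hS : ∀ f ∈ S, Function.Commute ⇑f g) {v : C(X, X)} (hv : v ∈ closure S) :
    Function.Commute ⇑v g :=
  closure_minimal hS (isClosed_setOf_commute hg) hv

theorem ext_of_commute_of_dense_orbit {F : Type*} [FunLike F X X] {S : Set F}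
    {u w : C(X, X)} (hu : ∀ g ∈ S, Function.Commute ⇑u ⇑g)
    (hw : ∀ g ∈ S, Function.Commute ⇑w ⇑g) {x : X}
    (hS : Dense {y | ∃ g ∈ S, g x = y}) (hx : u x = w x) : u = w := by
  refine ContinuousMap.ext (congrFun (Continuous.ext_on hS u.continuous w.continuous ?_))
  rintro _ ⟨g, hg, rfl⟩
  exact ((hu g hg).eq x).trans ((congrArg g hx).trans ((hw g hg).eq x).symm)

end ContinuousMap

theorem settled_stmt3_general {X : Type*} [MetricSpace X]
    (Γ : Subgroup (X ≃ᵢ X))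
    (habel : ∀ g h : X ≃ᵢ X, g ∈ Γ → h ∈ Γ → g * h = h * g)
    (hmin : ∀ x : X, Dense {y : X | ∃ g ∈ Γ, g x = y})
    (u w : C(X, X))
    (hu : u ∈ closure
      ((fun g : X ≃ᵢ X => (⟨⇑g, g.continuous⟩ : C(X, X))) '' (Γ : Set (X ≃ᵢ X))))
    (hw : w ∈ closure
      ((fun g : X ≃ᵢ X => (⟨⇑g, g.continuous⟩ : C(X, X))) '' (Γ : Set (X ≃ᵢ X))))
    (x : X) (hx : u x = w x) :
    u = w := by
  have commute_closure : ∀ v ∈ closure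
      ((fun g : X ≃ᵢ X => (⟨⇑g, g.continuous⟩ : C(X, X))) '' (Γ : Set (X ≃ᵢ X))),
      ∀ g ∈ Γ, Function.Commute ⇑v ⇑g := by
    intro v hv g hg
    refine ContinuousMap.commute_of_mem_closure g.continuous ?_ hv
    rintro _ ⟨h, hh, rfl⟩ y
    exact congrArg (· y) (habel h g hh hg)
  exact ContinuousMap.ext_of_commute_of_dense_orbit (S := (Γ : Set (X ≃ᵢ X)))
    (commute_closure u hu) (commute_closure w hw) (hmin x) hx

/-- Let `Γ` be an abelian subgroup of the isometry group of a compact metric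
space `X` acting minimally on `X`. Then the closure of `Γ` (taken in
`C(X, X)` with the topology of uniform convergence) acts freely on `X`: if
`u, w` lie in the closure of `Γ` and `u x = w x` for some `x ∈ X`, then
`u = w`. -/
theorem settled_stmt3 {X : Type*} [MetricSpace X] [CompactSpace X]
    (Γ : Subgroup (X ≃ᵢ X))
    (habel : ∀ g h : X ≃ᵢ X, g ∈ Γ → h ∈ Γ → g * h = h * g)
    (hmin : ∀ x : X, Dense {y : X | ∃ g ∈ Γ, g x = y})
    (u w : C(X, X))
    (hu : u ∈ closure
      ((fun g : X ≃ᵢ X => (⟨⇑g, g.continuous⟩ : C(X, X))) '' (Γ : Set (X ≃ᵢ X))))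
    (hw : w ∈ closure
      ((fun g : X ≃ᵢ X => (⟨⇑g, g.continuous⟩ : C(X, X))) '' (Γ : Set (X ≃ᵢ X))))
    (x : X) (hx : u x = w x) :
    u = w :=
  settled_stmt3_general Γ habel hmin u w hu hw x hx
end

section
/- Let a be a minimal automorphism of a spherically homogeneous rooted tree T (the cyclic group generated by a acts transitively on each vertex level V_n). Then the closure of ⟨a⟩ in Aut(T) is a maximal closed abelian subgroup acting freely and transitively on the boundary ∂T; more precisely, any closed subgroup B of Aut(T) containing the closure of ⟨a⟩ and acting freely on ∂T equals the closure of ⟨a⟩. -/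
/-- The boundary of the spherically homogeneous rooted tree with spherical
index `m`: infinite paths are sequences `x` with `x n ∈ {0, …, m n - 1}`. -/
abbrev Bd (m : ℕ → ℕ) : Type := ∀ n : ℕ, Fin (m n)

/-- A permutation of the boundary is a tree automorphism iff it preserves the
relation "agree on the first `N` coordinates" (i.e. it permutes each vertex
level preserving the tree structure). -/
def IsTreeAut {m : ℕ → ℕ} (e : Equiv.Perm (Bd m)) : Prop :=
  ∀ (N : ℕ) (x y : Bd m), (∀ n < N, x n = y n) ↔ (∀ n < N, e x n = e y n)

/-- The automorphism group of the spherically homogeneous rooted tree with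
spherical index `m`, realized as a subgroup of the permutations of the
boundary. -/
def treeAutGroup (m : ℕ → ℕ) : Subgroup (Equiv.Perm (Bd m)) where
  carrier := {e | IsTreeAut e}
  one_mem' := fun _ _ _ => Iff.rfl
  mul_mem' := by
    intro a b ha hb N x y
    exact (hb N x y).trans (ha N (b x) (b y))
  inv_mem' := by
    intro a ha N x y
    have h := ha N (a⁻¹ x) (a⁻¹ y)
    simpa using h.symm

/-- The orbit of `x` under the cyclic group generated by `a`. -/
def orbitZ {m : ℕ → ℕ} (a : Equiv.Perm (Bd m)) (x : Bd m) : Set (Bd m) :=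
  {y | ∃ k : ℤ, (a ^ k) x = y}

/-- `a` acts transitively on every vertex level `V n` (vertices at level `n`
are identified with length-`n` prefixes of boundary points). -/
def LevelTransitive {m : ℕ → ℕ} (a : Equiv.Perm (Bd m)) : Prop :=
  ∀ (n : ℕ) (x y : Bd m), ∃ k : ℤ, ∀ i < n, ((a ^ k) x) i = y i

/-- `f` belongs to the closure of the set `Γ` of tree automorphisms in the
profinite (= uniform) topology on `Aut(T)`: for every level `n` there is an
element of `Γ` agreeing with `f` up to level `n` everywhere. -/
def InClosure {m : ℕ → ℕ} (Γ : Set (Equiv.Perm (Bd m))) (f : Bd m → Bd m) : Prop :=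
  ∀ n : ℕ, ∃ g ∈ Γ, ∀ x : Bd m, ∀ i < n, f x i = g x i

/-!
Two powers of `a` that agree to level `p` at one boundary point agree to level `p` everywhere:
they commute with `a`, and the powers of `a` carry that point to every level-`p` vertex.
So a limit of powers of `a` is determined by the image of a single point, which gives freeness;
choosing at each level a power sending `x` close to `y` builds a limit sending `x` to `y`,
which gives transitivity. If `B` acts freely and contains the closure, an element `b ∈ B` and
the element `c` of the closure with `c x = b x` differ by `c⁻¹ b ∈ B` fixing `x`, so `b = c`.
-/

variable {m : ℕ → ℕ}

theorem inClosure_of_mem {Γ : Set (Equiv.Perm (Bd m))} {g : Equiv.Perm (Bd m)} (hg : g ∈ Γ) :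
    InClosure Γ g :=
  fun _ => ⟨g, hg, fun _ _ _ => rfl⟩

theorem InClosure.exists_zpow {a : Equiv.Perm (Bd m)} {f : Bd m → Bd m}
    (hf : InClosure (Subgroup.zpowers a : Set (Equiv.Perm (Bd m))) f) (n : ℕ) :
    ∃ k : ℤ, ∀ x, ∀ i < n, f x i = (a ^ k) x i := by
  obtain ⟨g, hg, hfg⟩ := hf n
  obtain ⟨k, rfl⟩ := Subgroup.mem_zpowers_iff.mp hg
  exact ⟨k, hfg⟩

namespace LevelTransitive

variable {a : Equiv.Perm (Bd m)}

theorem prefix_eq_of_commute (hamin : LevelTransitive a) (ha : a ∈ treeAutGroup m)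
    {g h : Equiv.Perm (Bd m)} (hg : g ∈ treeAutGroup m) (hh : h ∈ treeAutGroup m)
    (hga : Commute g a) (hha : Commute h a) {p : ℕ} {x : Bd m}
    (hx : ∀ i < p, g x i = h x i) (z : Bd m) :
    ∀ i < p, g z i = h z i := by
  obtain ⟨s, hs⟩ := hamin p x z
  have has : a ^ s ∈ treeAutGroup m := (treeAutGroup m).zpow_mem ha s
  have hgz : ∀ i < p, g ((a ^ s) x) i = g z i := (hg p _ _).mp hs
  have hhz : ∀ i < p, h ((a ^ s) x) i = h z i := (hh p _ _).mp hs
  have hsx : ∀ i < p, (a ^ s) (g x) i = (a ^ s) (h x) i := (has p _ _).mp hx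
  intro i hi
  calc g z i = g ((a ^ s) x) i := (hgz i hi).symm
    _ = (a ^ s) (g x) i := congrFun (Equiv.congr_fun (hga.zpow_right s).eq x) i
    _ = (a ^ s) (h x) i := hsx i hi
    _ = h ((a ^ s) x) i := (congrFun (Equiv.congr_fun (hha.zpow_right s).eq x) i).symm
    _ = h z i := hhz i hi

theorem zpow_prefix_eq (hamin : LevelTransitive a) (ha : a ∈ treeAutGroup m)
    {j l : ℤ} {p : ℕ} {x : Bd m}
    (hx : ∀ i < p, (a ^ j) x i = (a ^ l) x i) (z : Bd m) :
    ∀ i < p, (a ^ j) z i = (a ^ l) z i :=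
  hamin.prefix_eq_of_commute ha ((treeAutGroup m).zpow_mem ha j)
    ((treeAutGroup m).zpow_mem ha l) (Commute.zpow_left (Commute.refl a) j)
    (Commute.zpow_left (Commute.refl a) l) hx z

theorem exists_inClosure_zpowers_apply_eq (hamin : LevelTransitive a)
    (ha : a ∈ treeAutGroup m) (x y : Bd m) :
    ∃ f : Bd m → Bd m,
      InClosure (Subgroup.zpowers a : Set (Equiv.Perm (Bd m))) f ∧ f x = y := by
  choose k hk using fun n => hamin n x y
  refine ⟨fun z i => (a ^ k (i + 1)) z i, fun n => ?_,
    funext fun i => hk (i + 1) i i.lt_succ_self⟩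
  refine ⟨a ^ k n, Subgroup.zpow_mem _ (Subgroup.mem_zpowers a) _, fun z i hi => ?_⟩
  have hx : ∀ i' < i + 1, (a ^ k (i + 1)) x i' = (a ^ k n) x i' := fun i' hi' => by
    rw [hk (i + 1) i' hi', hk n i' (by omega)]
  exact hamin.zpow_prefix_eq ha hx z i i.lt_succ_self

theorem inClosure_zpowers_eq_of_apply_eq (hamin : LevelTransitive a)
    (ha : a ∈ treeAutGroup m) {f g : Bd m → Bd m}
    (hf : InClosure (Subgroup.zpowers a : Set (Equiv.Perm (Bd m))) f)
    (hg : InClosure (Subgroup.zpowers a : Set (Equiv.Perm (Bd m))) g)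
    {x : Bd m} (hx : f x = g x) : f = g := by
  funext z i
  obtain ⟨j, hj⟩ := hf.exists_zpow (i + 1)
  obtain ⟨l, hl⟩ := hg.exists_zpow (i + 1)
  have hjl : ∀ i' < i + 1, (a ^ j) x i' = (a ^ l) x i' := fun i' hi' => by
    rw [← hj x i' hi', ← hl x i' hi', hx]
  rw [hj z i i.lt_succ_self, hl z i i.lt_succ_self]
  exact hamin.zpow_prefix_eq ha hjl z i i.lt_succ_self

end LevelTransitive

theorem settled_stmt4_general {m : ℕ → ℕ}
    (a : Equiv.Perm (Bd m)) (ha : a ∈ treeAutGroup m) (hamin : LevelTransitive a)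
    (B : Subgroup (Equiv.Perm (Bd m)))
    (hBcontain : ∀ f : Bd m → Bd m,
      InClosure ((Subgroup.zpowers a : Subgroup (Equiv.Perm (Bd m))) : Set (Equiv.Perm (Bd m))) f →
      ∃ g ∈ B, ⇑g = f)
    (hBfree : ∀ g ∈ B, (∃ x : Bd m, g x = x) → g = 1) :
    -- the closure of ⟨a⟩ acts transitively on the boundary …
    (∀ x y : Bd m, ∃ f : Bd m → Bd m,
        InClosure ((Subgroup.zpowers a : Subgroup (Equiv.Perm (Bd m))) : Set (Equiv.Perm (Bd m))) f ∧
        f x = y) ∧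
    -- … and freely …
    (∀ f g : Bd m → Bd m,
        InClosure ((Subgroup.zpowers a : Subgroup (Equiv.Perm (Bd m))) : Set (Equiv.Perm (Bd m))) f →
        InClosure ((Subgroup.zpowers a : Subgroup (Equiv.Perm (Bd m))) : Set (Equiv.Perm (Bd m))) g →
        (∃ x : Bd m, f x = g x) → f = g) ∧
    -- … and B coincides with the closure of ⟨a⟩.
    (fun g : Equiv.Perm (Bd m) => ⇑g) '' (B : Set (Equiv.Perm (Bd m))) =
      {f : Bd m → Bd m |
        InClosure ((Subgroup.zpowers a : Subgroup (Equiv.Perm (Bd m))) : Set (Equiv.Perm (Bd m))) f} := by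
  refine ⟨hamin.exists_inClosure_zpowers_apply_eq ha,
    fun f g hf hg ⟨x, hx⟩ => hamin.inClosure_zpowers_eq_of_apply_eq ha hf hg hx, ?_⟩
  refine Set.Subset.antisymm ?_ fun f hf => hBcontain f hf
  rintro _ ⟨b, hb, rfl⟩
  rcases isEmpty_or_nonempty (Bd m) with _ | ⟨⟨x⟩⟩
  · change InClosure _ ⇑b
    rw [Subsingleton.elim (⇑b) ⇑(1 : Equiv.Perm (Bd m))]
    exact inClosure_of_mem (Subgroup.one_mem _)
  obtain ⟨f, hf, hfx⟩ := hamin.exists_inClosure_zpowers_apply_eq ha x (b x)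
  obtain ⟨c, hc, rfl⟩ := hBcontain f hf
  have hcb : c⁻¹ * b = 1 :=
    hBfree _ (mul_mem (inv_mem hc) hb)
      ⟨x, by rw [Equiv.Perm.mul_apply, ← hfx]; exact c.symm_apply_apply x⟩
  rwa [(inv_mul_eq_one.mp hcb).symm]

/-- Let `a` be a minimal automorphism of a spherically homogeneous rooted tree.
Then the closure of `⟨a⟩` in `Aut(T)` acts freely and transitively on the
boundary, and it is a maximal such group: any closed subgroup `B` of `Aut(T)`
containing the closure of `⟨a⟩` and acting freely on the boundary equals the
closure of `⟨a⟩`. -/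
theorem settled_stmt4 {m : ℕ → ℕ} (hm : ∀ n, 2 ≤ m n)
    (a : Equiv.Perm (Bd m)) (ha : a ∈ treeAutGroup m) (hamin : LevelTransitive a)
    (B : Subgroup (Equiv.Perm (Bd m))) (hBaut : B ≤ treeAutGroup m)
    (hBclosed : ∀ f : Bd m → Bd m, InClosure (B : Set (Equiv.Perm (Bd m))) f →
      ∃ g ∈ B, ⇑g = f)
    (hBcontain : ∀ f : Bd m → Bd m,
      InClosure ((Subgroup.zpowers a : Subgroup (Equiv.Perm (Bd m))) : Set (Equiv.Perm (Bd m))) f →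
      ∃ g ∈ B, ⇑g = f)
    (hBfree : ∀ g ∈ B, (∃ x : Bd m, g x = x) → g = 1) :
    -- the closure of ⟨a⟩ acts transitively on the boundary …
    (∀ x y : Bd m, ∃ f : Bd m → Bd m,
        InClosure ((Subgroup.zpowers a : Subgroup (Equiv.Perm (Bd m))) : Set (Equiv.Perm (Bd m))) f ∧
        f x = y) ∧
    -- … and freely …
    (∀ f g : Bd m → Bd m,
        InClosure ((Subgroup.zpowers a : Subgroup (Equiv.Perm (Bd m))) : Set (Equiv.Perm (Bd m))) f →
        InClosure ((Subgroup.zpowers a : Subgroup (Equiv.Perm (Bd m))) : Set (Equiv.Perm (Bd m))) g →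
        (∃ x : Bd m, f x = g x) → f = g) ∧
    -- … and B coincides with the closure of ⟨a⟩.
    (fun g : Equiv.Perm (Bd m) => ⇑g) '' (B : Set (Equiv.Perm (Bd m))) =
      {f : Bd m → Bd m |
        InClosure ((Subgroup.zpowers a : Subgroup (Equiv.Perm (Bd m))) : Set (Equiv.Perm (Bd m))) f} :=
  settled_stmt4_general a ha hamin B hBcontain hBfree
end

section
/- Let σ be an automorphism of a d-ary rooted tree T, n ≥ 1, and v ∈ V_n a vertex in a cycle of σ|V_n of length k. Then v is in a stable cycle of length k if and only if the union X = ⋃_{j=1}^{k} σ^j([v]) of the cylinder sets above the cycle is a minimal component of the dynamical system (∂T, σ). -/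
variable {d : ℕ}

/-- The vertex `v` (identified with any boundary point passing through it)
lies in a cycle of length `k` of the restriction of `σ` to the level-`n`
vertices of the `d`-ary tree. -/
def InCycle (σ : Equiv.Perm (Bd (fun _ => d))) (n k : ℕ) (v : Bd (fun _ => d)) : Prop :=
  0 < k ∧ (∀ i < n, ((σ ^ k) v) i = v i) ∧
    ∀ j, 0 < j → j < k → ¬ (∀ i < n, ((σ ^ j) v) i = v i)

/-- `x` passes through a level-`n` vertex lying above the cycle of the
level-`n` vertex of `v`. -/
def AboveCycle (σ : Equiv.Perm (Bd (fun _ => d))) (n : ℕ) (v x : Bd (fun _ => d)) : Prop :=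
  ∃ j : ℕ, ∀ i < n, x i = ((σ ^ j) v) i

/-- The vertex of `v` at level `n` lies in a *stable* cycle of length `k` of
`σ`: it lies in a cycle of length `k`, and for every level `m > n` all the
vertices of level `m` lying above this cycle are in one single cycle of the
restriction of `σ` to level `m` (necessarily of length `d^(m-n) * k`). -/
def InStableCycle (σ : Equiv.Perm (Bd (fun _ => d))) (n k : ℕ) (v : Bd (fun _ => d)) : Prop :=
  InCycle σ n k v ∧
    ∀ mlev, n < mlev → ∀ x y : Bd (fun _ => d), AboveCycle σ n v x → AboveCycle σ n v y →
      ∃ t : ℕ, ∀ i < mlev, ((σ ^ t) x) i = y i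

/-- A level-`n` vertex `w` of the `d`-ary tree is in a stable cycle of `σ`. -/
def StableVertex (σ : Equiv.Perm (Bd (fun _ => d))) (n : ℕ) (w : Fin n → Fin d) : Prop :=
  ∃ v : Bd (fun _ => d), (∀ i : Fin n, v (i : ℕ) = w i) ∧ ∃ k : ℕ, InStableCycle σ n k v

/-- `σ` is settled: the proportion of level-`n` vertices lying in stable
cycles of `σ` tends to `1` as `n → ∞`. -/
def SettledAut (σ : Equiv.Perm (Bd (fun _ => d))) : Prop :=
  Filter.Tendsto
    (fun n : ℕ => (Nat.card {w : Fin n → Fin d // StableVertex σ n w} : ℝ) /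
      (Fintype.card (Fin n → Fin d) : ℝ))
    Filter.atTop (nhds 1)

/-- `σ` is strongly settled: from some level `n ≥ 1` on, every vertex lies in
a stable cycle of `σ`. -/
def StronglySettledAut (σ : Equiv.Perm (Bd (fun _ => d))) : Prop :=
  ∃ n : ℕ, 0 < n ∧ ∀ w : Fin n → Fin d, StableVertex σ n w

/-- A minimal component of the dynamical system `(∂T, σ)`: a nonempty closed
`σ`-invariant set on which every `σ`-orbit is dense. -/
def IsMinimalComponent (σ : Equiv.Perm (Bd (fun _ => d))) (X : Set (Bd (fun _ => d))) : Prop :=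
  X.Nonempty ∧ IsClosed X ∧ ⇑σ '' X = X ∧ ∀ x ∈ X, closure (orbitZ σ x) = X

/-!
A tree automorphism maps cylinders to cylinders and acts periodically on each level, so the
`ℤ`-orbit of `x` meets the same level-`N` vertices as its `ℕ`-orbit. Hence `y` lies in the orbit
closure of `x` exactly when, for every `N`, some forward iterate of `x` passes through the
level-`N` vertex of `y`. The union `X` of the cylinders above the cycle is closed and invariant
under all powers of `σ`, and stability of the cycle says precisely that this holds for all
`x, y ∈ X`, i.e. that every orbit in `X` is dense in `X`.
-/

open PiNat Set

section TreeAut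

variable {m : ℕ → ℕ} {g : Equiv.Perm (Bd m)}

theorem isClosed_cylinder (x : Bd m) (N : ℕ) : IsClosed (cylinder x N) := by
  rw [cylinder_eq_pi]
  exact isClosed_set_pi fun _ _ => isClosed_singleton

theorem exists_cylinder_subset_of_mem_nhds {U : Set (Bd m)} {y : Bd m} (hU : U ∈ nhds y) :
    ∃ N, cylinder y N ⊆ U := by
  obtain ⟨_, ⟨x, N, rfl⟩, hy, hsub⟩ := (isTopologicalBasis_cylinders _).mem_nhds_iff.1 hU
  exact ⟨N, mem_cylinder_iff_eq.1 hy ▸ hsub⟩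

theorem apply_mem_cylinder_apply_iff (hg : g ∈ treeAutGroup m) {x y : Bd m} {N : ℕ} :
    g y ∈ cylinder (g x) N ↔ y ∈ cylinder x N :=
  (hg N y x).symm

theorem image_cylinder (hg : g ∈ treeAutGroup m) (x : Bd m) (N : ℕ) :
    ⇑g '' cylinder x N = cylinder (g x) N := by
  refine Subset.antisymm (image_subset_iff.2 fun y hy => (apply_mem_cylinder_apply_iff hg).2 hy)
    fun y hy => ⟨g⁻¹ y, (apply_mem_cylinder_apply_iff hg).1 ?_, by simp⟩
  simpa using hy

theorem zpow_apply_mem_cylinder (hg : g ∈ treeAutGroup m) {x : Bd m} {N : ℕ}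
    (h : g x ∈ cylinder x N) (t : ℤ) : (g ^ t) x ∈ cylinder x N := by
  induction t using Int.induction_on with
  | zero => exact self_mem_cylinder x N
  | succ t ih =>
    rw [zpow_add_one, Equiv.Perm.mul_apply]
    have := (apply_mem_cylinder_apply_iff ((treeAutGroup m).zpow_mem hg t)).2 h
    exact fun i hi => (this i hi).trans (ih i hi)
  | pred t ih =>
    have := (apply_mem_cylinder_apply_iff ((treeAutGroup m).zpow_mem hg (-t - 1))).2 h
    rw [← Equiv.Perm.mul_apply, ← zpow_add_one, sub_add_cancel] at this
    exact fun i hi => ((this i hi).symm).trans (ih i hi)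

theorem zpow_apply_mem_cylinder_zpow_apply_of_modEq (hg : g ∈ treeAutGroup m) {x : Bd m}
    {N k : ℕ} (hk : (g ^ k) x ∈ cylinder x N) {a b : ℤ} (hab : a ≡ b [ZMOD k]) :
    (g ^ a) x ∈ cylinder ((g ^ b) x) N := by
  obtain ⟨q, hq⟩ := hab.dvd
  have hb : (g ^ b) x = (g ^ a) (((g ^ k) ^ q) x) := by
    rw [← Equiv.Perm.mul_apply, ← zpow_natCast, ← zpow_mul, ← zpow_add, ← hq, add_sub_cancel]
  rw [hb, apply_mem_cylinder_apply_iff ((treeAutGroup m).zpow_mem hg a), mem_cylinder_comm]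
  exact zpow_apply_mem_cylinder ((treeAutGroup m).pow_mem hg k) hk q

theorem exists_pos_pow_apply_mem_cylinder (hg : g ∈ treeAutGroup m) (x : Bd m) (N : ℕ) :
    ∃ p > 0, (g ^ p) x ∈ cylinder x N := by
  obtain ⟨a, b, hab, hfab⟩ := Set.finite_univ.exists_lt_map_eq_of_forall_mem
    (f := fun t : ℕ => fun i : Fin N => (g ^ t) x i) fun _ => mem_univ _
  refine ⟨b - a, Nat.sub_pos_of_lt hab, ?_⟩
  rw [← apply_mem_cylinder_apply_iff ((treeAutGroup m).pow_mem hg a), ← Equiv.Perm.mul_apply,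
    ← pow_add, Nat.add_sub_cancel' hab.le]
  exact fun i hi => (congrFun hfab ⟨i, hi⟩).symm

theorem exists_pow_apply_mem_cylinder_zpow_apply (hg : g ∈ treeAutGroup m) (x : Bd m) (N : ℕ)
    (t : ℤ) : ∃ s : ℕ, (g ^ s) x ∈ cylinder ((g ^ t) x) N := by
  obtain ⟨p, hp, hpx⟩ := exists_pos_pow_apply_mem_cylinder hg x N
  refine ⟨(t % p).toNat, ?_⟩
  rw [← zpow_natCast, Int.toNat_of_nonneg (Int.emod_nonneg t (by omega))]
  exact zpow_apply_mem_cylinder_zpow_apply_of_modEq hg hpx (Int.mod_modEq t p)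

theorem mem_closure_orbitZ_iff (hg : g ∈ treeAutGroup m) {x y : Bd m} :
    y ∈ closure (orbitZ g x) ↔ ∀ N, ∃ s : ℕ, (g ^ s) x ∈ cylinder y N := by
  refine ⟨fun hy N => ?_, fun h => mem_closure_iff_nhds.2 fun U hU => ?_⟩
  · obtain ⟨_, hzy, t, rfl⟩ := mem_closure_iff.1 hy _ (isOpen_cylinder _ y N) (self_mem_cylinder y N)
    obtain ⟨s, hs⟩ := exists_pow_apply_mem_cylinder_zpow_apply hg x N t
    exact ⟨s, fun i hi => (hs i hi).trans (hzy i hi)⟩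
  · obtain ⟨N, hN⟩ := exists_cylinder_subset_of_mem_nhds hU
    obtain ⟨s, hs⟩ := h N
    exact ⟨_, hN hs, s, zpow_natCast g s ▸ rfl⟩

end TreeAut

theorem Equiv.Perm.image_eq_of_forall_zpow_mapsTo {α : Type*} {g : Equiv.Perm α} {s : Set α}
    (h : ∀ t : ℤ, MapsTo (g ^ t) s s) : ⇑g '' s = s := by
  refine Subset.antisymm (image_subset_iff.2 fun x hx => by simpa using h 1 hx) fun x hx => ?_
  exact ⟨g⁻¹ x, by simpa using h (-1) hx, by simp⟩

theorem closure_orbitZ_subset {m : ℕ → ℕ} {g : Equiv.Perm (Bd m)} {s : Set (Bd m)}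
    (hs : IsClosed s) (h : ∀ t : ℤ, MapsTo (g ^ t) s s) {x : Bd m} (hx : x ∈ s) :
    closure (orbitZ g x) ⊆ s :=
  closure_minimal (by rintro _ ⟨t, rfl⟩; exact h t hx) hs

section Cycle

variable {σ : Equiv.Perm (Bd (fun _ => d))} {n k : ℕ} {v : Bd (fun _ => d)}

theorem biUnion_image_cylinder_eq_setOf_aboveCycle (hσ : σ ∈ treeAutGroup (fun _ => d))
    (hk : 0 < k) (hv : (σ ^ k) v ∈ cylinder v n) :
    ⋃ j ∈ Finset.Icc 1 k, ⇑(σ ^ j) '' cylinder v n = {x | AboveCycle σ n v x} := by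
  ext x
  simp only [mem_iUnion, image_cylinder ((treeAutGroup _).pow_mem hσ _), exists_prop,
    Finset.mem_Icc, mem_ofPred_eq, AboveCycle]
  refine ⟨fun ⟨j, _, hx⟩ => ⟨j, hx⟩, fun ⟨j, hx⟩ => ?_⟩
  -- the representative of `j` modulo `k` in `[1, k]`
  have hr : (j + (k - 1)) % k + 1 ≡ j [MOD k] := calc
    _ ≡ j + (k - 1) + 1 [MOD k] := (Nat.mod_modEq _ _).add_right 1
    _ = j + k := by omega
    _ ≡ j [MOD k] := Nat.add_modEq_right
  have hjr := zpow_apply_mem_cylinder_zpow_apply_of_modEq hσ hv (Int.natCast_modEq_iff.2 hr.symm)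
  simp only [zpow_natCast] at hjr
  exact ⟨_, ⟨le_add_self, Nat.mod_lt _ hk⟩, fun i hi => (hx i hi).trans (hjr i hi)⟩

theorem AboveCycle.zpow_apply (hσ : σ ∈ treeAutGroup (fun _ => d)) {x : Bd (fun _ => d)}
    (hx : AboveCycle σ n v x) (t : ℤ) : AboveCycle σ n v ((σ ^ t) x) := by
  obtain ⟨j, hj⟩ := hx
  have htx : (σ ^ t) x ∈ cylinder ((σ ^ (t + j)) v) n := by
    rw [zpow_add, Equiv.Perm.mul_apply, zpow_natCast]
    exact (apply_mem_cylinder_apply_iff ((treeAutGroup _).zpow_mem hσ t)).2 hj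
  obtain ⟨s, hs⟩ := exists_pow_apply_mem_cylinder_zpow_apply hσ v n (t + j)
  exact ⟨s, fun i hi => (htx i hi).trans (hs i hi).symm⟩

end Cycle

theorem settled_stmt13_general (d : ℕ)
    (σ : Equiv.Perm (Bd (fun _ => d))) (hσ : σ ∈ treeAutGroup (fun _ => d))
    (n : ℕ) (v : Bd (fun _ => d)) (k : ℕ)
    (hcyc : InCycle σ n k v) :
    InStableCycle σ n k v ↔
      IsMinimalComponent σ
        (⋃ j ∈ Finset.Icc 1 k, ⇑(σ ^ j) '' {x : Bd (fun _ => d) | ∀ i < n, x i = v i}) := by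
  have hX := biUnion_image_cylinder_eq_setOf_aboveCycle hσ hcyc.1 hcyc.2.1
  have hclosed : IsClosed {x | AboveCycle σ n v x} := hX ▸ isClosed_biUnion_finset fun j _ =>
    image_cylinder ((treeAutGroup _).pow_mem hσ j) v n ▸ isClosed_cylinder _ n
  have hinv : ∀ t : ℤ, MapsTo (σ ^ t) {x | AboveCycle σ n v x} {x | AboveCycle σ n v x} :=
    fun t _ hx => hx.zpow_apply hσ t
  change _ ↔ IsMinimalComponent σ (⋃ j ∈ Finset.Icc 1 k, ⇑(σ ^ j) '' cylinder v n)
  rw [hX]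
  constructor
  · rintro ⟨-, hstab⟩
    refine ⟨⟨v, 0, fun _ _ => rfl⟩, hclosed, Equiv.Perm.image_eq_of_forall_zpow_mapsTo hinv,
      fun x hx => (closure_orbitZ_subset hclosed hinv hx).antisymm fun y hy => ?_⟩
    refine (mem_closure_orbitZ_iff hσ).2 fun N => ?_
    obtain ⟨s, hs⟩ := hstab (max N (n + 1)) (by omega) x y hx hy
    exact ⟨s, cylinder_anti _ (le_max_left _ _) hs⟩
  · rintro ⟨-, -, -, hmin⟩
    exact ⟨hcyc, fun N _ x y hx hy => (mem_closure_orbitZ_iff hσ).1 ((hmin x hx).symm ▸ hy) N⟩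

/-- Let `σ` be an automorphism of the `d`-ary rooted tree, `n ≥ 1`, and let
`v` be (a boundary point through) a vertex of level `n` lying in a cycle of
`σ|V n` of length `k`. Then `v` is in a stable cycle of length `k` if and
only if the union `X = ⋃_{j=1}^{k} σ^j [v]` of the cylinder sets above the
cycle is a minimal component of the dynamical system `(∂T, σ)`. -/
theorem settled_stmt13 (d : ℕ) (hd : 2 ≤ d)
    (σ : Equiv.Perm (Bd (fun _ => d))) (hσ : σ ∈ treeAutGroup (fun _ => d))
    (n : ℕ) (hn : 1 ≤ n) (v : Bd (fun _ => d)) (k : ℕ)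
    (hcyc : InCycle σ n k v) :
    InStableCycle σ n k v ↔
      IsMinimalComponent σ
        (⋃ j ∈ Finset.Icc 1 k, ⇑(σ ^ j) '' {x : Bd (fun _ => d) | ∀ i < n, x i = v i}) :=
  settled_stmt13_general d σ hσ n v k hcyc
end

section
/- An automorphism σ of a d-ary rooted tree T is settled if and only if for μ-almost every x ∈ ∂T the closure of the σ-orbit of x is a clopen subset of ∂T, where μ is the uniform Bernoulli measure on ∂T. -/
variable {d : ℕ}

/-!
The orbit closure `C` of `x` is clopen iff, for some `n`, it is a union of level-`n` cylinders
(compactness of `∂T`). That happens exactly when the level-`n` vertex of `x` lies in a stable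
cycle: then `C` is the union of the cylinders above that cycle, and conversely any two points of
`C` are approximated by each other's orbit at every level. So the sets `Sₙ` of points whose
level-`n` vertex is stable increase to the set of points with clopen orbit closure, while
`μ Sₙ` is exactly the proportion in the definition of settledness; continuity of `μ` from below
finishes the proof.
-/

open PiNat Set Filter Topology MeasureTheory

section Cylinders

variable {E : ℕ → Type*}

def IsSaturatedAt (n : ℕ) (S : Set (∀ n, E n)) : Prop :=
  ∀ x ∈ S, cylinder x n ⊆ S

lemma IsSaturatedAt.mono {S : Set (∀ n, E n)} {m n : ℕ} (hS : IsSaturatedAt m S) (hmn : m ≤ n) :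
    IsSaturatedAt n S :=
  fun x hx => (cylinder_anti x hmn).trans (hS x hx)

lemma IsSaturatedAt.compl {S : Set (∀ n, E n)} {n : ℕ} (hS : IsSaturatedAt n S) :
    IsSaturatedAt n Sᶜ :=
  fun x hx y hy hyS => hx (hS y hyS ((mem_cylinder_comm x y n).1 hy))

variable [∀ n, TopologicalSpace (E n)] [∀ n, DiscreteTopology (E n)]

lemma IsSaturatedAt.isOpen {S : Set (∀ n, E n)} {n : ℕ} (hS : IsSaturatedAt n S) : IsOpen S :=
  isOpen_iff_forall_mem_open.2 fun x hx =>
    ⟨cylinder x n, hS x hx, isOpen_cylinder E x n, self_mem_cylinder x n⟩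

lemma IsSaturatedAt.isClopen {S : Set (∀ n, E n)} {n : ℕ} (hS : IsSaturatedAt n S) :
    IsClopen S :=
  ⟨isOpen_compl_iff.1 hS.compl.isOpen, hS.isOpen⟩

lemma IsClopen.exists_isSaturatedAt [CompactSpace (∀ n, E n)] {S : Set (∀ n, E n)}
    (hS : IsClopen S) : ∃ n, IsSaturatedAt n S := by
  have hopen : ∀ n, IsOpen {x : ∀ n, E n | cylinder x n ⊆ S} := fun n =>
    isOpen_iff_forall_mem_open.2 fun x hx =>
      ⟨cylinder x n, fun y hy => by rwa [mem_ofPred_eq, mem_cylinder_iff_eq.1 hy],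
        isOpen_cylinder E x n, self_mem_cylinder x n⟩
  have hcover : S ⊆ ⋃ n, {x : ∀ n, E n | cylinder x n ⊆ S} := by
    intro x hx
    obtain ⟨_, ⟨y, n, rfl⟩, hxy, hsub⟩ :=
      (isTopologicalBasis_cylinders E).exists_subset_of_mem_open hx hS.isOpen
    exact mem_iUnion.2 ⟨n, by rwa [mem_ofPred_eq, mem_cylinder_iff_eq.1 hxy]⟩
  have hmono : Monotone fun n => {x : ∀ n, E n | cylinder x n ⊆ S} :=
    fun m n hmn x hx => (cylinder_anti x hmn).trans hx
  exact hS.isClosed.isCompact.elim_directed_cover _ hopen hcover hmono.directed_le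

lemma isClopen_iff_exists_isSaturatedAt [CompactSpace (∀ n, E n)] {S : Set (∀ n, E n)} :
    IsClopen S ↔ ∃ n, IsSaturatedAt n S :=
  ⟨IsClopen.exists_isSaturatedAt, fun ⟨_, hS⟩ => hS.isClopen⟩

lemma mem_closure_iff_forall_cylinder {S : Set (∀ n, E n)} {x : ∀ n, E n} :
    x ∈ closure S ↔ ∀ n, (cylinder x n ∩ S).Nonempty := by
  rw [(isTopologicalBasis_cylinders E).mem_closure_iff]
  refine ⟨fun h n => h _ ⟨x, n, rfl⟩ (self_mem_cylinder x n), ?_⟩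
  rintro h _ ⟨y, n, rfl⟩ hx
  rw [← mem_cylinder_iff_eq.1 hx]
  exact h n

end Cylinders

section TreeAut

variable {m : ℕ → ℕ}

lemma IsTreeAut.apply_mem_cylinder {e : Equiv.Perm (Bd m)} (he : IsTreeAut e) {x y : Bd m}
    {n : ℕ} (h : y ∈ cylinder x n) : e y ∈ cylinder (e x) n :=
  (he n y x).1 h

lemma IsTreeAut.mem_cylinder_of_apply {e : Equiv.Perm (Bd m)} (he : IsTreeAut e) {x y : Bd m}
    {n : ℕ} (h : e y ∈ cylinder (e x) n) : y ∈ cylinder x n :=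
  (he n y x).2 h

def vertexStabilizer (x : Bd m) (n : ℕ) : Subgroup (Equiv.Perm (Bd m)) where
  carrier := {g | IsTreeAut g ∧ g x ∈ cylinder x n}
  one_mem' := ⟨(treeAutGroup m).one_mem, self_mem_cylinder x n⟩
  mul_mem' := by
    rintro a b ⟨ha, hax⟩ ⟨hb, hbx⟩
    refine ⟨(treeAutGroup m).mul_mem ha hb, ?_⟩
    rw [Equiv.Perm.mul_apply, ← mem_cylinder_iff_eq.1 hax]
    exact ha.apply_mem_cylinder hbx
  inv_mem' := by
    rintro a ⟨ha, hax⟩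
    have ha' : IsTreeAut a⁻¹ := (treeAutGroup m).inv_mem ha
    refine ⟨ha', (mem_cylinder_comm _ _ n).1 ?_⟩
    simpa using ha'.apply_mem_cylinder hax

lemma pow_mem_orbitZ (σ : Equiv.Perm (Bd m)) (x : Bd m) (j : ℕ) : (σ ^ j) x ∈ orbitZ σ x :=
  ⟨j, by rw [zpow_natCast]⟩

variable {σ : Equiv.Perm (Bd m)}

lemma exists_pos_pow_mem_vertexStabilizer (hσ : σ ∈ treeAutGroup m) (x : Bd m) (n : ℕ) :
    ∃ N, 0 < N ∧ σ ^ N ∈ vertexStabilizer x n := by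
  obtain ⟨a, b, hab, heq⟩ :=
    Finite.exists_ne_map_eq_of_infinite fun k : ℕ => fun i : Fin n => (σ ^ k) x i
  wlog hlt : a < b generalizing a b
  · exact this b a hab.symm heq.symm (by omega)
  refine ⟨b - a, by omega, (treeAutGroup m).pow_mem hσ _, ?_⟩
  apply ((treeAutGroup m).pow_mem hσ a).mem_cylinder_of_apply
  rw [← Equiv.Perm.mul_apply, ← pow_add, Nat.add_sub_cancel' hlt.le]
  exact fun i hi => congrFun heq.symm ⟨i, hi⟩

lemma exists_pow_mem_cylinder_zpow (hσ : σ ∈ treeAutGroup m) (x : Bd m) (n : ℕ) (t : ℤ) :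
    ∃ j : ℕ, (σ ^ t) x ∈ cylinder ((σ ^ j) x) n := by
  obtain ⟨N, hN, hstab⟩ := exists_pos_pow_mem_vertexStabilizer hσ x n
  refine ⟨(t % N).toNat, ?_⟩
  have hsplit : σ ^ t = σ ^ (t % N).toNat * (σ ^ N) ^ (t / N) := by
    rw [← zpow_natCast, ← zpow_natCast, ← zpow_mul, ← zpow_add,
      Int.toNat_of_nonneg (Int.emod_nonneg _ (by omega)), Int.emod_add_mul_ediv]
  rw [hsplit, Equiv.Perm.mul_apply]
  exact ((treeAutGroup m).pow_mem hσ _).apply_mem_cylinder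
    ((vertexStabilizer x n).zpow_mem hstab (t / N)).2

lemma exists_pow_mem_cylinder_of_mem_closure_orbitZ (hσ : σ ∈ treeAutGroup m) {x y z : Bd m}
    (hy : y ∈ closure (orbitZ σ x)) (hz : z ∈ closure (orbitZ σ x)) (n : ℕ) :
    ∃ j : ℕ, (σ ^ j) y ∈ cylinder z n := by
  obtain ⟨_, hty, t, rfl⟩ := mem_closure_iff_forall_cylinder.1 hy n
  obtain ⟨_, hsz, s, rfl⟩ := mem_closure_iff_forall_cylinder.1 hz n
  obtain ⟨j, hj⟩ := exists_pow_mem_cylinder_zpow hσ y n (s - t)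
  have hshift : (σ ^ (s - t)) y ∈ cylinder ((σ ^ s) x) n := by
    have := ((treeAutGroup m).zpow_mem hσ (s - t)).apply_mem_cylinder
      ((mem_cylinder_comm _ _ n).1 hty)
    rwa [← Equiv.Perm.mul_apply, ← zpow_add, sub_add_cancel] at this
  refine ⟨j, ?_⟩
  rw [mem_cylinder_iff_eq, ← mem_cylinder_iff_eq.1 hsz, ← mem_cylinder_iff_eq.1 hshift,
    mem_cylinder_iff_eq.1 hj]

end TreeAut

section Stable

lemma isSaturatedAt_aboveCycle (σ : Equiv.Perm (Bd fun _ => d)) (n : ℕ) (v : Bd fun _ => d) :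
    IsSaturatedAt n {y | AboveCycle σ n v y} :=
  fun _ ⟨j, hj⟩ _ hz => ⟨j, fun i hi => (hz i hi).trans (hj i hi)⟩

variable {σ : Equiv.Perm (Bd fun _ => d)}

lemma exists_inCycle (hσ : σ ∈ treeAutGroup fun _ => d) (n : ℕ) (x : Bd fun _ => d) :
    ∃ k, InCycle σ n k x := by
  classical
  obtain ⟨N, hN, hstab⟩ := exists_pos_pow_mem_vertexStabilizer hσ x n
  have hex : ∃ k, 0 < k ∧ (σ ^ k) x ∈ cylinder x n := ⟨N, hN, hstab.2⟩
  exact ⟨Nat.find hex, (Nat.find_spec hex).1, (Nat.find_spec hex).2,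
    fun j hj hjk hcyc => Nat.find_min hex hjk ⟨hj, hcyc⟩⟩

lemma closure_orbitZ_eq_aboveCycle (hσ : σ ∈ treeAutGroup fun _ => d) {n k : ℕ}
    {v x : Bd fun _ => d} (hv : InStableCycle σ n k v) (hx : x ∈ cylinder v n) :
    closure (orbitZ σ x) = {y | AboveCycle σ n v y} := by
  have hA := isSaturatedAt_aboveCycle σ n v
  have hxA : AboveCycle σ n v x := ⟨0, hx⟩
  refine subset_antisymm (closure_minimal ?_ hA.isClopen.isClosed) fun y hy => ?_
  · rintro _ ⟨t, rfl⟩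
    obtain ⟨j, hj⟩ := exists_pow_mem_cylinder_zpow hσ x n t
    exact hA _ ⟨j, ((treeAutGroup _).pow_mem hσ j).apply_mem_cylinder hx⟩ hj
  · refine mem_closure_iff_forall_cylinder.2 fun l => ?_
    obtain ⟨t, ht⟩ := hv.2 (max l (n + 1)) (by omega) x y hxA hy
    exact ⟨(σ ^ t) x, cylinder_anti y (le_max_left _ _) ht, pow_mem_orbitZ σ x t⟩

lemma stableVertex_iff_isSaturatedAt (hσ : σ ∈ treeAutGroup fun _ => d) (n : ℕ)
    (x : Bd fun _ => d) :
    StableVertex σ n (fun i : Fin n => x i) ↔ IsSaturatedAt n (closure (orbitZ σ x)) := by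
  constructor
  · rintro ⟨v, hv, k, hk⟩
    rw [closure_orbitZ_eq_aboveCycle hσ hk fun i hi => (hv ⟨i, hi⟩).symm]
    exact isSaturatedAt_aboveCycle σ n v
  · intro hC
    obtain ⟨k, hk⟩ := exists_inCycle hσ n x
    have habove : ∀ y, AboveCycle σ n x y → y ∈ closure (orbitZ σ x) :=
      fun y ⟨j, hj⟩ => hC _ (subset_closure (pow_mem_orbitZ σ x j)) hj
    exact ⟨x, fun _ => rfl, k, hk, fun l _ y z hy hz =>
      exists_pow_mem_cylinder_of_mem_closure_orbitZ hσ (habove y hy) (habove z hz) l⟩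

end Stable

section Measure

lemma measurableSet_setOf_prefix {m : ℕ → ℕ} (n : ℕ) (p : (∀ i : Fin n, Fin (m i)) → Prop) :
    MeasurableSet {x : Bd m | p fun i : Fin n => x i} :=
  (measurable_pi_lambda _ fun _ => measurable_pi_apply _) (Set.toFinite {w | p w}).measurableSet

variable {μ : Measure (Bd fun _ => d)}

lemma isProbabilityMeasure_of_measure_cylinder (hd : 0 < d)
    (hμ : ∀ (n : ℕ) (v : Bd fun _ => d), μ {x | ∀ i < n, x i = v i} = (1 / (d : ENNReal)) ^ n) :
    IsProbabilityMeasure μ :=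
  ⟨by simpa using hμ 0 fun _ => ⟨0, hd⟩⟩

lemma toReal_measure_setOf_prefix (hd : 0 < d)
    (hμ : ∀ (n : ℕ) (v : Bd fun _ => d), μ {x | ∀ i < n, x i = v i} = (1 / (d : ENNReal)) ^ n)
    (n : ℕ) (p : (Fin n → Fin d) → Prop) :
    (μ {x | p fun i : Fin n => x i}).toReal =
      Nat.card {w // p w} / Fintype.card (Fin n → Fin d) := by
  classical
  set π : (Bd fun _ => d) → Fin n → Fin d := fun x i => x i
  have hfiber : ∀ w, π ⁻¹' {w} =
      {x | ∀ i < n, x i = if h : i < n then w ⟨i, h⟩ else ⟨0, hd⟩} := by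
    intro w
    ext x
    simp only [mem_preimage, mem_singleton_iff, funext_iff, Fin.forall_iff, mem_ofPred_eq]
    constructor <;> intro h i hi <;> simpa [hi] using h i hi
  have hsum := sum_measure_preimage_singleton (μ := μ) (Finset.univ.filter p) (f := π)
    fun w _ => measurableSet_setOf_prefix (m := fun _ => d) n (· = w)
  rw [Finset.coe_filter] at hsum
  simp only [hfiber, hμ, Finset.sum_const, nsmul_eq_mul, Finset.mem_univ, true_and] at hsum
  change (μ (π ⁻¹' {w | p w})).toReal = _
  rw [← hsum, Nat.card_eq_fintype_card, Fintype.card_subtype, Fintype.card_fun,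
    Fintype.card_fin, Fintype.card_fin]
  simp [div_eq_mul_inv]

end Measure

/-- An automorphism `σ` of the `d`-ary rooted tree is settled if and only if
for `μ`-almost every boundary point `x` the closure of the `σ`-orbit of `x`
is clopen, where `μ` is the uniform Bernoulli measure on the boundary (each
level-`n` cylinder has measure `d⁻ⁿ`). -/
theorem settled_stmt14 (d : ℕ) (hd : 2 ≤ d)
    (σ : Equiv.Perm (Bd (fun _ => d))) (hσ : σ ∈ treeAutGroup (fun _ => d))
    (μ : MeasureTheory.Measure (Bd (fun _ => d)))
    (hμ : ∀ (n : ℕ) (v : Bd (fun _ => d)),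
      μ {x : Bd (fun _ => d) | ∀ i < n, x i = v i} = (1 / (d : ENNReal)) ^ n) :
    SettledAut σ ↔ ∀ᵐ x ∂μ, IsClopen (closure (orbitZ σ x)) := by
  have hd0 : 0 < d := by omega
  have := isProbabilityMeasure_of_measure_cylinder hd0 hμ
  set S : ℕ → Set (Bd fun _ => d) := fun n => {x | StableVertex σ n fun i : Fin n => x i}
  have hS : ∀ n, S n = {x | IsSaturatedAt n (closure (orbitZ σ x))} := fun n =>
    Set.ext fun x => stableVertex_iff_isSaturatedAt hσ n x
  have hmono : Monotone S := fun m n hmn x hx => by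
    rw [hS] at hx ⊢
    exact hx.mono hmn
  have hunion : ⋃ n, S n = {x | IsClopen (closure (orbitZ σ x))} := by
    simp only [hS, isClopen_iff_exists_isSaturatedAt, Set.ofPred_exists]
  have hratio : (fun n => (μ (S n)).toReal) = fun n =>
      (Nat.card {w : Fin n → Fin d // StableVertex σ n w} : ℝ) /
        Fintype.card (Fin n → Fin d) :=
    funext fun n => toReal_measure_setOf_prefix hd0 hμ n _
  calc SettledAut σ ↔ Tendsto (fun n => μ (S n)) atTop (𝓝 1) := by
        rw [SettledAut, ← hratio, ← ENNReal.toReal_one,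
          ENNReal.tendsto_toReal_iff (fun n => measure_ne_top μ _) ENNReal.one_ne_top]
    _ ↔ μ (⋃ n, S n) = 1 :=
        ⟨fun h => tendsto_nhds_unique (tendsto_measure_iUnion_atTop hmono) h,
          fun h => h ▸ tendsto_measure_iUnion_atTop hmono⟩
    _ ↔ ∀ᵐ x ∂μ, IsClopen (closure (orbitZ σ x)) := by
        have hmeas : MeasurableSet (⋃ n, S n) :=
          .iUnion fun n => measurableSet_setOf_prefix n _
        rw [hunion] at hmeas ⊢
        rw [ae_iff_measure_eq hmeas.nullMeasurableSet, measure_univ]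
end
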